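/- Let a, b, c > 0 and let f : ℝ³ → ℝ, f(x, y, z) = x²/a² + y²/b² + z²/c² − 1. At each of the two characteristic points p = (0, 0, c) and p = (0, 0, −c) of the ellipsoid f⁻¹(0), the metric coefficient satisfies K̂_p = −1 + [(X₁X₁f)(p)·(X₂X₂f)(p) − (X₁X₂f)(p)·(X₂X₁f)(p)] / [X₂(X₁f)(p) − X₁(X₂f)(p)]² = −3/4 + c²/(a²·b²). -/

import Mathlib

/-- Derivative along the Heisenberg frame field `X₁ = ∂_x − (y/2)∂_z`. -/
noncomputable def X1d (g : ℝ × ℝ × ℝ → ℝ) (x : ℝ × ℝ × ℝ) : ℝ :=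
  fderiv ℝ g x (1, 0, -x.2.1 / 2)

/-- Derivative along the Heisenberg frame field `X₂ = ∂_y + (x/2)∂_z`. -/
noncomputable def X2d (g : ℝ × ℝ × ℝ → ℝ) (x : ℝ × ℝ × ℝ) : ℝ :=
  fderiv ℝ g x (0, 1, x.1 / 2)

/-!
At `p = (0, 0, z)` the frame `X₁, X₂` coincides with `∂_x, ∂_y`, so the horizontal Hessian of
`f = x²/a² + y²/b² + z²/c² − 1` is read off from `X₁f = 2x/a² − yz/c²` and `X₂f = 2y/b² + xz/c²`:
`X₁X₁f = 2/a²`, `X₂X₂f = 2/b²`, `X₁X₂f = z/c² = −X₂X₁f`. Hence `det Hess_H f = 4/(a²b²) + z²/c⁴`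
and `([X₂,X₁]f)² = 4z²/c⁴`, and `z² = c²` gives `K̂ = −1 + c²/(a²b²) + 1/4`.
-/

noncomputable def Khat (f : ℝ × ℝ × ℝ → ℝ) (p : ℝ × ℝ × ℝ) : ℝ :=
  -1 + (X1d (X1d f) p * X2d (X2d f) p - X1d (X2d f) p * X2d (X1d f) p)
    / (X2d (X1d f) p - X1d (X2d f) p) ^ 2

noncomputable def ellipsoidFun (a b c : ℝ) : ℝ × ℝ × ℝ → ℝ :=
  fun q => q.1 ^ 2 / a ^ 2 + q.2.1 ^ 2 / b ^ 2 + q.2.2 ^ 2 / c ^ 2 - 1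

section Coordinates

open ContinuousLinearMap

variable (q : ℝ × ℝ × ℝ)

theorem hasFDerivAt_coord_x : HasFDerivAt (fun q : ℝ × ℝ × ℝ => q.1) (fst ℝ ℝ (ℝ × ℝ)) q :=
  hasFDerivAt_fst

theorem hasFDerivAt_coord_y :
    HasFDerivAt (fun q : ℝ × ℝ × ℝ => q.2.1) ((fst ℝ ℝ ℝ).comp (snd ℝ ℝ (ℝ × ℝ))) q :=
  hasFDerivAt_fst.comp q hasFDerivAt_snd

theorem hasFDerivAt_coord_z :
    HasFDerivAt (fun q : ℝ × ℝ × ℝ => q.2.2) ((snd ℝ ℝ ℝ).comp (snd ℝ ℝ (ℝ × ℝ))) q :=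
  hasFDerivAt_snd.comp q hasFDerivAt_snd

end Coordinates

section Ellipsoid

variable (a b c : ℝ)

theorem fderiv_ellipsoidFun_apply (q v : ℝ × ℝ × ℝ) :
    fderiv ℝ (ellipsoidFun a b c) q v
      = 2 * q.1 * v.1 / a ^ 2 + 2 * q.2.1 * v.2.1 / b ^ 2 + 2 * q.2.2 * v.2.2 / c ^ 2 := by
  have h : HasFDerivAt (ellipsoidFun a b c) _ q :=
    (((((hasFDerivAt_coord_x q).pow 2).mul_const (a ^ 2)⁻¹).add
      (((hasFDerivAt_coord_y q).pow 2).mul_const (b ^ 2)⁻¹)).add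
      (((hasFDerivAt_coord_z q).pow 2).mul_const (c ^ 2)⁻¹)).sub_const 1
  rw [h.fderiv]
  simp only [add_apply, smul_apply, ContinuousLinearMap.comp_apply, ContinuousLinearMap.coe_fst',
    ContinuousLinearMap.coe_snd', smul_eq_mul, nsmul_eq_mul, Nat.cast_ofNat]
  ring

theorem X1d_ellipsoidFun :
    X1d (ellipsoidFun a b c) = fun q => 2 * q.1 / a ^ 2 - q.2.1 * q.2.2 / c ^ 2 := by
  funext q
  rw [X1d, fderiv_ellipsoidFun_apply]
  ring

theorem X2d_ellipsoidFun :
    X2d (ellipsoidFun a b c) = fun q => 2 * q.2.1 / b ^ 2 + q.1 * q.2.2 / c ^ 2 := by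
  funext q
  rw [X2d, fderiv_ellipsoidFun_apply]
  ring

theorem fderiv_X1d_ellipsoidFun_apply (q v : ℝ × ℝ × ℝ) :
    fderiv ℝ (X1d (ellipsoidFun a b c)) q v
      = 2 * v.1 / a ^ 2 - (v.2.1 * q.2.2 + q.2.1 * v.2.2) / c ^ 2 := by
  have h : HasFDerivAt (fun q : ℝ × ℝ × ℝ => 2 * q.1 / a ^ 2 - q.2.1 * q.2.2 / c ^ 2) _ q :=
    (((hasFDerivAt_coord_x q).const_mul 2).mul_const (a ^ 2)⁻¹).sub
      (((hasFDerivAt_coord_y q).mul (hasFDerivAt_coord_z q)).mul_const (c ^ 2)⁻¹)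
  rw [X1d_ellipsoidFun, h.fderiv]
  simp only [smul_add, sub_apply, smul_apply, ContinuousLinearMap.coe_fst', smul_eq_mul, add_apply,
    ContinuousLinearMap.comp_apply, ContinuousLinearMap.coe_snd']
  ring

theorem fderiv_X2d_ellipsoidFun_apply (q v : ℝ × ℝ × ℝ) :
    fderiv ℝ (X2d (ellipsoidFun a b c)) q v
      = 2 * v.2.1 / b ^ 2 + (v.1 * q.2.2 + q.1 * v.2.2) / c ^ 2 := by
  have h : HasFDerivAt (fun q : ℝ × ℝ × ℝ => 2 * q.2.1 / b ^ 2 + q.1 * q.2.2 / c ^ 2) _ q :=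
    (((hasFDerivAt_coord_y q).const_mul 2).mul_const (b ^ 2)⁻¹).add
      (((hasFDerivAt_coord_x q).mul (hasFDerivAt_coord_z q)).mul_const (c ^ 2)⁻¹)
  rw [X2d_ellipsoidFun, h.fderiv]
  simp only [smul_add, add_apply, smul_apply, ContinuousLinearMap.comp_apply,
    ContinuousLinearMap.coe_snd', ContinuousLinearMap.coe_fst', smul_eq_mul]
  ring

theorem Khat_ellipsoidFun_zAxis (z : ℝ) :
    Khat (ellipsoidFun a b c) (0, 0, z)
      = -1 + (2 / a ^ 2 * (2 / b ^ 2) + (z / c ^ 2) ^ 2) / (2 * z / c ^ 2) ^ 2 := by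
  simp only [Khat, X1d, X2d, fderiv_X1d_ellipsoidFun_apply, fderiv_X2d_ellipsoidFun_apply]
  ring

theorem Khat_ellipsoidFun_of_sq_eq (hc : c ≠ 0) {z : ℝ} (hz : z ^ 2 = c ^ 2) :
    Khat (ellipsoidFun a b c) (0, 0, z) = -(3 / 4) + c ^ 2 / (a ^ 2 * b ^ 2) := by
  rw [Khat_ellipsoidFun_zAxis, div_pow, div_pow, mul_pow, hz]
  field_simp
  ring

end Ellipsoid

theorem ellipsoid_Khat_general
    (a b c : ℝ) (hc : 0 < c)
    (f : ℝ × ℝ × ℝ → ℝ)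
    (hf : f = fun q => q.1 ^ 2 / a ^ 2 + q.2.1 ^ 2 / b ^ 2 + q.2.2 ^ 2 / c ^ 2 - 1)
    (p : ℝ × ℝ × ℝ)
    (hp : p = ((0 : ℝ), (0 : ℝ), c) ∨ p = ((0 : ℝ), (0 : ℝ), -c)) :
    -1 + (X1d (X1d f) p * X2d (X2d f) p - X1d (X2d f) p * X2d (X1d f) p)
        / (X2d (X1d f) p - X1d (X2d f) p) ^ 2
      = -(3 / 4) + c ^ 2 / (a ^ 2 * b ^ 2) := by
  change Khat f p = _
  obtain ⟨z, rfl, hz⟩ : ∃ z, p = (0, 0, z) ∧ z ^ 2 = c ^ 2 := by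
    rcases hp with rfl | rfl <;> exact ⟨_, rfl, by ring⟩
  rw [show f = ellipsoidFun a b c from hf]
  exact Khat_ellipsoidFun_of_sq_eq a b c hc.ne' hz

/-- At each of the two characteristic points `(0, 0, ±c)` of the ellipsoid
`{x²/a² + y²/b² + z²/c² = 1}` in the Heisenberg group, the metric coefficient is
`K̂ = −1 + det Hess_H f / ([X₂,X₁]f)² = −3/4 + c²/(a²b²)`. -/
theorem ellipsoid_Khat
    (a b c : ℝ) (ha : 0 < a) (hb : 0 < b) (hc : 0 < c)
    (f : ℝ × ℝ × ℝ → ℝ)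
    (hf : f = fun q => q.1 ^ 2 / a ^ 2 + q.2.1 ^ 2 / b ^ 2 + q.2.2 ^ 2 / c ^ 2 - 1)
    (p : ℝ × ℝ × ℝ)
    (hp : p = ((0 : ℝ), (0 : ℝ), c) ∨ p = ((0 : ℝ), (0 : ℝ), -c)) :
    -1 + (X1d (X1d f) p * X2d (X2d f) p - X1d (X2d f) p * X2d (X1d f) p)
        / (X2d (X1d f) p - X1d (X2d f) p) ^ 2
      = -(3 / 4) + c ^ 2 / (a ^ 2 * b ^ 2) :=
  ellipsoid_Khat_general a b c hc f hf p hp
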